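/- Let B=(G,H) be a pseudo-Laman bigraph with biedge set ℰ without self-loops, fix a biedge ē∈ℰ, and let d=(d_V,d_W) be a bidistance on B compatible with wt=(−1,…,−1) such that d_V and d_W take values only in {0,−1}. Suppose that ē is neither a bridge in G nor a bridge in H, and that neither d_V nor d_W is identically zero. Then the quotient bigraph B_d untangles via ē into two bigraphs, with respect to the partition ℰ=ℰ₁⊔ℰ₂⊔{ē}, where ℰ₁={e∈ℰ : d_V=0 on τ_G(e) and d_W=−1 on τ_H(e)} and ℰ₂={e∈ℰ : d_V=−1 on τ_G(e) and d_W=0 on τ_H(e)}. -/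

import Mathlib

set_option maxHeartbeats 1000000

noncomputable section
open Classical

namespace LamanPaper

variable {V E : Type}

/-- The adjacency relation induced by an incidence map `ends`. -/
def adjRel (ends : E → Sym2 V) : V → V → Prop := fun u v => ∃ e : E, ends e = s(u, v)

/-- The setoid of connected components of the graph with incidence map `ends`. -/
def ccSetoid (ends : E → Sym2 V) : Setoid V :=
  ⟨Relation.EqvGen (adjRel ends), Relation.EqvGen.is_equivalence _⟩

/-- The number of connected components. -/
def numCC (ends : E → Sym2 V) : ℕ := Nat.card (Quotient (ccSetoid ends))

/-- The dimension of a graph: number of vertices minus number of connected components. -/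
def gDim (ends : E → Sym2 V) : ℕ := Nat.card V - numCC ends

/-- Restriction of a graph to a set of edges. -/
def restrictEnds (ends : E → Sym2 V) (S : Set E) : {e : E // e ∈ S} → Sym2 V :=
  fun e => ends e.1

/-- Deletion of a set of edges from a graph. -/
def deleteEnds (ends : E → Sym2 V) (S : Set E) : {e : E // e ∉ S} → Sym2 V :=
  fun e => ends e.1

/-- The setoid on vertices generated by contracting the edges in `S`. -/
def contrSetoid (ends : E → Sym2 V) (S : Set E) : Setoid V :=
  ⟨Relation.EqvGen fun u v => ∃ e ∈ S, ends e = s(u, v), Relation.EqvGen.is_equivalence _⟩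

/-- Contraction of the edges in `S`: the remaining edges join the equivalence classes of
their endpoints. -/
def contractEnds (ends : E → Sym2 V) (S : Set E) :
    {e : E // e ∉ S} → Sym2 (Quotient (contrSetoid ends S)) :=
  fun e => (ends e.1).map (Quotient.mk (contrSetoid ends S))

/-- An edge is a bridge if deleting it increases the number of connected components. -/
def IsBridge (ends : E → Sym2 V) (e : E) : Prop :=
  numCC ends < numCC (deleteEnds ends ({e} : Set E))

/-- The smaller endpoint of an (unordered) edge, with respect to a linear order. -/
def sMin [LinearOrder V] (s : Sym2 V) : V :=
  Sym2.lift ⟨fun a b => min a b, fun a b => min_comm a b⟩ s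

/-- The larger endpoint of an (unordered) edge, with respect to a linear order. -/
def sMax [LinearOrder V] (s : Sym2 V) : V :=
  Sym2.lift ⟨fun a b => max a b, fun a b => max_comm a b⟩ s

theorem sMin_mem [LinearOrder V] (s : Sym2 V) : sMin s ∈ s := by
  induction s using Sym2.ind with
  | _ x y => rcases min_choice x y with h | h <;> simp [sMin, Sym2.lift_mk, h, Sym2.mem_iff]

theorem sMax_mem [LinearOrder V] (s : Sym2 V) : sMax s ∈ s := by
  induction s using Sym2.ind with
  | _ x y => rcases max_choice x y with h | h <;> simp [sMax, Sym2.lift_mk, h, Sym2.mem_iff]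

/-- A bigraph: a pair of finite multigraphs `G = (V, ℰ)` and `H = (W, ℰ)` sharing the same
set of (bi)edges, together with fixed total orders on the two vertex sets. -/
structure Bigraph where
  ℰ : Type
  V : Type
  W : Type
  finE : Finite ℰ
  finV : Finite V
  finW : Finite W
  τG : ℰ → Sym2 V
  τH : ℰ → Sym2 W
  ordV : LinearOrder V
  ordW : LinearOrder W

namespace Bigraph

variable (B : Bigraph)

instance : Finite B.ℰ := B.finE
instance : Finite B.V := B.finV
instance : Finite B.W := B.finW

/-- The dimension of the first graph of a bigraph. -/
def dimG : ℕ := gDim B.τG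

/-- The dimension of the second graph of a bigraph. -/
def dimH : ℕ := gDim B.τH

/-- A bigraph is pseudo-Laman if `dim G + dim H = |ℰ| + 1`. -/
def PseudoLaman : Prop := B.dimG + B.dimH = Nat.card B.ℰ + 1

/-- A bigraph has a (self-)loop if some biedge is a self-loop in `G` or in `H`. -/
def HasLoop : Prop := (∃ e, (B.τG e).IsDiag) ∨ (∃ e, (B.τH e).IsDiag)

/-- The set `P` of ordered pairs of distinct vertices of `G` joined by some edge. -/
def Pset : Set (B.V × B.V) := {p | p.1 ≠ p.2 ∧ ∃ e, B.τG e = s(p.1, p.2)}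

/-- The set `Q` of ordered pairs of distinct vertices of `H` joined by some edge. -/
def Qset : Set (B.W × B.W) := {q | q.1 ≠ q.2 ∧ ∃ e, B.τH e = s(q.1, q.2)}

/-- The smaller endpoint (w.r.t. the fixed total order) of a biedge in `G`. -/
def eFstG (e : B.ℰ) : B.V := letI := B.ordV; sMin (B.τG e)

/-- The larger endpoint of a biedge in `G`. -/
def eSndG (e : B.ℰ) : B.V := letI := B.ordV; sMax (B.τG e)

/-- The smaller endpoint of a biedge in `H`. -/
def eFstH (e : B.ℰ) : B.W := letI := B.ordW; sMin (B.τH e)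

/-- The larger endpoint of a biedge in `H`. -/
def eSndH (e : B.ℰ) : B.W := letI := B.ordW; sMax (B.τH e)

theorem eFstG_mem (e : B.ℰ) : B.eFstG e ∈ B.τG e := by
  letI := B.ordV; exact sMin_mem _

theorem eSndG_mem (e : B.ℰ) : B.eSndG e ∈ B.τG e := by
  letI := B.ordV; exact sMax_mem _

theorem eFstH_mem (e : B.ℰ) : B.eFstH e ∈ B.τH e := by
  letI := B.ordW; exact sMin_mem _

theorem eSndH_mem (e : B.ℰ) : B.eSndH e ∈ B.τH e := by
  letI := B.ordW; exact sMax_mem _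

/-- The affine solution set `Z^B(λ)` of a bigraph with distinguished biedge `ebar` and
parameters `lam`. -/
def ZSet (ebar : B.ℰ) (lam : {e : B.ℰ // e ≠ ebar} → ℂ) :
    Set ((↥B.Pset → ℂ) × (↥B.Qset → ℂ)) :=
  {xy |
    (∀ p : ↥B.Pset, (p : B.V × B.V) = (B.eFstG ebar, B.eSndG ebar) → xy.1 p = 1) ∧
    (∀ q : ↥B.Qset, (q : B.W × B.W) = (B.eFstH ebar, B.eSndH ebar) → xy.2 q = 1) ∧
    (∀ e : {e : B.ℰ // e ≠ ebar}, ∀ p : ↥B.Pset, ∀ q : ↥B.Qset,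
      (p : B.V × B.V) = (B.eFstG e.1, B.eSndG e.1) →
      (q : B.W × B.W) = (B.eFstH e.1, B.eSndH e.1) →
      xy.1 p * xy.2 q = lam e) ∧
    (∀ (n : ℕ) (u : ℕ → B.V) (w : Fin n → ↥B.Pset),
      (∀ i : Fin n, (w i : B.V × B.V) = (u i.1, u (i.1 + 1))) → u n = u 0 →
      ∑ i, xy.1 (w i) = 0) ∧
    (∀ (n : ℕ) (u : ℕ → B.W) (w : Fin n → ↥B.Qset),
      (∀ i : Fin n, (w i : B.W × B.W) = (u i.1, u (i.1 + 1))) → u n = u 0 →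
      ∑ i, xy.2 (w i) = 0)}

/-- `B` has Laman number `N` with respect to the biedge `ebar`:  there is a nonzero
polynomial `p` in the parameters such that whenever `p` does not vanish, the solution set
`Z^B(λ)` has exactly `N` elements.  By convention a bigraph containing a self-loop has
Laman number `0`. -/
def HasLamanNumber (ebar : B.ℰ) (N : ℕ) : Prop :=
  (B.HasLoop ∧ N = 0) ∨
  (¬ B.HasLoop ∧ ∃ P : MvPolynomial {e : B.ℰ // e ≠ ebar} ℂ, P ≠ 0 ∧
    ∀ lam : {e : B.ℰ // e ≠ ebar} → ℂ, MvPolynomial.eval lam P ≠ 0 →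
      (B.ZSet ebar lam).Finite ∧ Nat.card ↥(B.ZSet ebar lam) = N)

/-- The bigraph obtained by restricting the biedges to a subset `S` (both in `G` and `H`). -/
def restrict (S : Set B.ℰ) : Bigraph where
  ℰ := {e : B.ℰ // e ∈ S}
  V := B.V
  W := B.W
  finE := Subtype.finite
  finV := B.finV
  finW := B.finW
  τG := fun e => B.τG e.1
  τH := fun e => B.τH e.1
  ordV := B.ordV
  ordW := B.ordW

/-- The bigraph `^M B = (G / M, H ∖ M)`: contract the biedges of `M` in `G` and delete them
in `H`. -/
def ctrG (M : Set B.ℰ) (ord : LinearOrder (Quotient (contrSetoid B.τG M))) : Bigraph where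
  ℰ := {e : B.ℰ // e ∉ M}
  V := Quotient (contrSetoid B.τG M)
  W := B.W
  finE := Subtype.finite
  finV := Quotient.finite _
  finW := B.finW
  τG := contractEnds B.τG M
  τH := fun e => B.τH e.1
  ordV := ord
  ordW := B.ordW

/-- The bigraph `B ^ M = (G ∖ M, H / M)`: delete the biedges of `M` in `G` and contract them
in `H`. -/
def ctrH (M : Set B.ℰ) (ord : LinearOrder (Quotient (contrSetoid B.τH M))) : Bigraph where
  ℰ := {e : B.ℰ // e ∉ M}
  V := B.V
  W := Quotient (contrSetoid B.τH M)
  finE := Subtype.finite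
  finV := B.finV
  finW := Quotient.finite _
  τG := fun e => B.τG e.1
  τH := contractEnds B.τH M
  ordV := B.ordV
  ordW := ord

/-! ### Bidistances -/

/-- Symmetry of a function on `P`: `d_V(u,v) = d_V(v,u)`. -/
def BidistSymmG (dV : ↥B.Pset → ℚ) : Prop :=
  ∀ p p' : ↥B.Pset, (p' : B.V × B.V) = ((p : B.V × B.V).2, (p : B.V × B.V).1) → dV p' = dV p

/-- Symmetry of a function on `Q`: `d_W(t,w) = d_W(w,t)`. -/
def BidistSymmH (dW : ↥B.Qset → ℚ) : Prop :=
  ∀ q q' : ↥B.Qset, (q' : B.W × B.W) = ((q : B.W × B.W).2, (q : B.W × B.W).1) → dW q' = dW q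

/-- The sum condition: `d_V(u,v) + d_W(t,w) = wt(e)` for every biedge `e ≠ ebar`. -/
def BidistSum (ebar : B.ℰ) (wt : {e : B.ℰ // e ≠ ebar} → ℚ)
    (dV : ↥B.Pset → ℚ) (dW : ↥B.Qset → ℚ) : Prop :=
  ∀ e : {e : B.ℰ // e ≠ ebar}, ∀ p : ↥B.Pset, ∀ q : ↥B.Qset,
    s((p : B.V × B.V).1, (p : B.V × B.V).2) = B.τG e.1 →
    s((q : B.W × B.W).1, (q : B.W × B.W).2) = B.τH e.1 →
    dV p + dW q = wt e

/-- The base condition: `d_V(ū,v̄) = d_W(t̄,w̄) = 0` on the distinguished biedge. -/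
def BidistBase (ebar : B.ℰ) (dV : ↥B.Pset → ℚ) (dW : ↥B.Qset → ℚ) : Prop :=
  (∀ p : ↥B.Pset, s((p : B.V × B.V).1, (p : B.V × B.V).2) = B.τG ebar → dV p = 0) ∧
  (∀ q : ↥B.Qset, s((q : B.W × B.W).1, (q : B.W × B.W).2) = B.τH ebar → dW q = 0)

/-- On every closed walk in `G`, the minimum of `d_V` over the consecutive vertex pairs is
attained at least twice. -/
def BidistMinG (dV : ↥B.Pset → ℚ) : Prop :=
  ∀ (n : ℕ) (u : ℕ → B.V) (w : Fin n → ↥B.Pset),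
    (∀ i : Fin n, (w i : B.V × B.V) = (u i.1, u (i.1 + 1))) → u n = u 0 →
    ∀ i : Fin n, (∀ k, dV (w i) ≤ dV (w k)) → ∃ j, j ≠ i ∧ dV (w j) = dV (w i)

/-- On every closed walk in `H`, the minimum of `d_W` over the consecutive vertex pairs is
attained at least twice. -/
def BidistMinH (dW : ↥B.Qset → ℚ) : Prop :=
  ∀ (n : ℕ) (u : ℕ → B.W) (w : Fin n → ↥B.Qset),
    (∀ i : Fin n, (w i : B.W × B.W) = (u i.1, u (i.1 + 1))) → u n = u 0 →
    ∀ i : Fin n, (∀ k, dW (w i) ≤ dW (w k)) → ∃ j, j ≠ i ∧ dW (w j) = dW (w i)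

/-- A bidistance on `B` compatible with the weight vector `wt`. -/
def IsBidistance (ebar : B.ℰ) (wt : {e : B.ℰ // e ≠ ebar} → ℚ)
    (dV : ↥B.Pset → ℚ) (dW : ↥B.Qset → ℚ) : Prop :=
  B.BidistSymmG dV ∧ B.BidistSymmH dW ∧ B.BidistSum ebar wt dV dW ∧
  B.BidistBase ebar dV dW ∧ B.BidistMinG dV ∧ B.BidistMinH dW

/-! ### The quotient bigraph `B_d` -/

/-- The value of `d_V` on (the endpoint pair of) a biedge. -/
def gvalG (dV : ↥B.Pset → ℚ) (e : B.ℰ) : ℚ :=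
  if h : ∃ p : ↥B.Pset, s((p : B.V × B.V).1, (p : B.V × B.V).2) = B.τG e then dV h.choose
  else 0

/-- The value of `d_W` on (the endpoint pair of) a biedge. -/
def gvalH (dW : ↥B.Qset → ℚ) (e : B.ℰ) : ℚ :=
  if h : ∃ q : ↥B.Qset, s((q : B.W × B.W).1, (q : B.W × B.W).2) = B.τH e then dW h.choose
  else 0

/-- Incidences of the graph `G`: pairs of a biedge and one of its endpoints. -/
def IncG := {q : B.ℰ × B.V // q.2 ∈ B.τG q.1}

/-- Incidences of the graph `H`. -/
def IncH := {q : B.ℰ × B.W // q.2 ∈ B.τH q.1}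

instance : Finite B.IncG := by unfold IncG; infer_instance
instance : Finite B.IncH := by unfold IncH; infer_instance

/-- Two incidences `(e,v)`, `(e',v')` of `G` are identified in `B_d` if the `d_V`-levels of
`e` and `e'` agree (say equal to `α`) and `v`, `v'` are connected by edges of level `> α`. -/
def relIncG (dV : ↥B.Pset → ℚ) : B.IncG → B.IncG → Prop := fun a b =>
  B.gvalG dV a.1.1 = B.gvalG dV b.1.1 ∧
  Relation.EqvGen (fun u v => ∃ e, B.gvalG dV a.1.1 < B.gvalG dV e ∧ B.τG e = s(u, v))
    a.1.2 b.1.2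

def relIncH (dW : ↥B.Qset → ℚ) : B.IncH → B.IncH → Prop := fun a b =>
  B.gvalH dW a.1.1 = B.gvalH dW b.1.1 ∧
  Relation.EqvGen (fun u v => ∃ e, B.gvalH dW a.1.1 < B.gvalH dW e ∧ B.τH e = s(u, v))
    a.1.2 b.1.2

def incSetoidG (dV : ↥B.Pset → ℚ) : Setoid B.IncG :=
  ⟨Relation.EqvGen (B.relIncG dV), Relation.EqvGen.is_equivalence _⟩

def incSetoidH (dW : ↥B.Qset → ℚ) : Setoid B.IncH :=
  ⟨Relation.EqvGen (B.relIncH dW), Relation.EqvGen.is_equivalence _⟩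

/-- The vertices of the first graph `G_{d_V}` of the quotient bigraph `B_d`:
classes of incidences.  This realizes the disjoint union of the contractions
`G_{≥α} / G_{>α}` (with isolated vertices discarded). -/
def QVertG (dV : ↥B.Pset → ℚ) := Quotient (B.incSetoidG dV)

def QVertH (dW : ↥B.Qset → ℚ) := Quotient (B.incSetoidH dW)

/-- The incidence map of `G_{d_V}`. -/
def quotEndsG (dV : ↥B.Pset → ℚ) : B.ℰ → Sym2 (B.QVertG dV) := fun e =>
  s(Quotient.mk (B.incSetoidG dV) ⟨(e, B.eFstG e), B.eFstG_mem e⟩,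
    Quotient.mk (B.incSetoidG dV) ⟨(e, B.eSndG e), B.eSndG_mem e⟩)

/-- The incidence map of `H_{d_W}`. -/
def quotEndsH (dW : ↥B.Qset → ℚ) : B.ℰ → Sym2 (B.QVertH dW) := fun e =>
  s(Quotient.mk (B.incSetoidH dW) ⟨(e, B.eFstH e), B.eFstH_mem e⟩,
    Quotient.mk (B.incSetoidH dW) ⟨(e, B.eSndH e), B.eSndH_mem e⟩)

/-- The quotient bigraph `B_d = (G_{d_V}, H_{d_W})` of a bigraph by a bidistance `(d_V, d_W)`,
with arbitrarily fixed total orders on the new vertex sets.  It has the same biedges as `B`. -/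
def quotBigraph (dV : ↥B.Pset → ℚ) (dW : ↥B.Qset → ℚ)
    (oV : LinearOrder (B.QVertG dV)) (oW : LinearOrder (B.QVertH dW)) : Bigraph where
  ℰ := B.ℰ
  V := B.QVertG dV
  W := B.QVertH dW
  finE := B.finE
  finV := Quotient.finite _
  finW := Quotient.finite _
  τG := B.quotEndsG dV
  τH := B.quotEndsH dW
  ordV := oV
  ordW := oW

/-! ### Untangling -/

/-- `B` untangles via the biedge `ebar` with respect to the decomposition
`ℰ = E1 ⊔ E2 ⊔ {ebar}`, `V = V1 ⊔ V2`, `W = W1 ⊔ W2`:  the graph `G` is the disjoint union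
of the subgraph on `V1` with edges `E1 ∪ {ebar}` and the subgraph on `V2` with edges `E2`,
while `H` is the disjoint union of the subgraph on `W1` with edges `E1` and the subgraph on
`W2` with edges `E2 ∪ {ebar}`.  The two bigraphs into which `B` untangles are then
`B₁ = B.restrict E1` and `B₂ = B.restrict E2`. -/
def Untangles (ebar : B.ℰ) (E1 E2 : Set B.ℰ) (V1 V2 : Set B.V) (W1 W2 : Set B.W) : Prop :=
  ebar ∉ E1 ∧ ebar ∉ E2 ∧ E1 ∩ E2 = ∅ ∧ (∀ e : B.ℰ, e = ebar ∨ e ∈ E1 ∨ e ∈ E2) ∧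
  V1 ∩ V2 = ∅ ∧ V1 ∪ V2 = Set.univ ∧
  (∀ e ∈ E1, ∀ v, v ∈ B.τG e → v ∈ V1) ∧ (∀ v, v ∈ B.τG ebar → v ∈ V1) ∧
  (∀ e ∈ E2, ∀ v, v ∈ B.τG e → v ∈ V2) ∧
  W1 ∩ W2 = ∅ ∧ W1 ∪ W2 = Set.univ ∧
  (∀ e ∈ E1, ∀ x, x ∈ B.τH e → x ∈ W1) ∧
  (∀ e ∈ E2, ∀ x, x ∈ B.τH e → x ∈ W2) ∧ (∀ x, x ∈ B.τH ebar → x ∈ W2)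

/-! ### The rational map `f_B` -/

/-- The vector of coordinates of the rational map `f_B`, evaluated on representatives
`x : V → ℂ` and `y : W → ℂ`:  the `e`-th coordinate is `(x_u - x_v)(y_t - y_w)` where
`{u,v} = τ_G(e)` with `u ≺ v` and `{t,w} = τ_H(e)` with `t ≺ w`.  (For a self-loop the
corresponding factor is `0`.) -/
def fVec (x : B.V → ℂ) (y : B.W → ℂ) : B.ℰ → ℂ :=
  fun e => (x (B.eFstG e) - x (B.eSndG e)) * (y (B.eFstH e) - y (B.eSndH e))

/-- The subspace `L_G` of vectors that are constant on each connected component of `G`. -/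
def LG : Submodule ℂ (B.V → ℂ) where
  carrier := {x | ∀ u v : B.V, Relation.EqvGen (adjRel B.τG) u v → x u = x v}
  add_mem' := by
    intro a b ha hb u v h
    simp only [Pi.add_apply, ha u v h, hb u v h]
  zero_mem' := by intro u v _; rfl
  smul_mem' := by
    intro c a ha u v h
    simp only [Pi.smul_apply, ha u v h]

/-- The subspace `L_H` of vectors that are constant on each connected component of `H`. -/
def LH : Submodule ℂ (B.W → ℂ) where
  carrier := {y | ∀ u v : B.W, Relation.EqvGen (adjRel B.τH) u v → y u = y v}
  add_mem' := by
    intro a b ha hb u v h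
    simp only [Pi.add_apply, ha u v h, hb u v h]
  zero_mem' := by intro u v _; rfl
  smul_mem' := by
    intro c a ha u v h
    simp only [Pi.smul_apply, ha u v h]

/-- Dominance of the rational map `f_B`:  the image of `f_B` is not contained in any
proper algebraic subset of `ℙ(ℂ^ℰ)`, equivalently in no zero set of a nonzero homogeneous
polynomial. -/
def FDominant : Prop :=
  ¬ ∃ (n : ℕ) (P : MvPolynomial B.ℰ ℂ), P ≠ 0 ∧ P.IsHomogeneous n ∧
      ∀ (x : B.V → ℂ) (y : B.W → ℂ), MvPolynomial.eval (B.fVec x y) P = 0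

end Bigraph

/-!
A vertex of `B_d` is a class of incidences `(e, v)` whose biedges all lie at the same
`d_V`-level, so it has a level, and the endpoints of `e` in `G_{d_V}` lie at level `d_V(e)`
(likewise in `H_{d_W}`). As `d_V` takes values in `{0, -1}` and `d_V + d_W = -1` off `ē`, every
biedge other than `ē` lies at level `(0, -1)` or `(-1, 0)`, while `ē` lies at `(0, 0)`. Splitting
the vertices of `G_{d_V}` and of `H_{d_W}` according to whether their level is `0` therefore
separates `ℰ₁ ∪ {ē}` from `ℰ₂` in `G_{d_V}` and `ℰ₁` from `ℰ₂ ∪ {ē}` in `H_{d_W}`.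
-/

namespace Bigraph

variable (B : Bigraph)

theorem exists_Pset_of_not_isDiag {e : B.ℰ} (he : ¬ (B.τG e).IsDiag) :
    ∃ p : ↥B.Pset, s((p : B.V × B.V).1, (p : B.V × B.V).2) = B.τG e := by
  obtain ⟨⟨u, v⟩, huv⟩ := Quot.exists_rep (B.τG e)
  have huv : B.τG e = s(u, v) := huv.symm
  exact ⟨⟨(u, v), fun h => he (huv ▸ Sym2.mk_isDiag_iff.mpr h), e, huv⟩, huv.symm⟩

theorem exists_Qset_of_not_isDiag {e : B.ℰ} (he : ¬ (B.τH e).IsDiag) :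
    ∃ q : ↥B.Qset, s((q : B.W × B.W).1, (q : B.W × B.W).2) = B.τH e := by
  obtain ⟨⟨u, v⟩, huv⟩ := Quot.exists_rep (B.τH e)
  have huv : B.τH e = s(u, v) := huv.symm
  exact ⟨⟨(u, v), fun h => he (huv ▸ Sym2.mk_isDiag_iff.mpr h), e, huv⟩, huv.symm⟩

variable {B}

theorem gvalG_eq {dV : ↥B.Pset → ℚ} (hsym : B.BidistSymmG dV) {e : B.ℰ} {p : ↥B.Pset}
    (hp : s((p : B.V × B.V).1, (p : B.V × B.V).2) = B.τG e) : B.gvalG dV e = dV p := by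
  have hex : ∃ p' : ↥B.Pset, s((p' : B.V × B.V).1, (p' : B.V × B.V).2) = B.τG e := ⟨p, hp⟩
  rw [gvalG, dif_pos hex]
  rcases Sym2.eq_iff.mp (hex.choose_spec.trans hp.symm) with ⟨h1, h2⟩ | ⟨h1, h2⟩
  · rw [Subtype.ext (Prod.ext h1 h2)]
  · exact hsym p hex.choose (Prod.ext h1 h2)

theorem gvalH_eq {dW : ↥B.Qset → ℚ} (hsym : B.BidistSymmH dW) {e : B.ℰ} {q : ↥B.Qset}
    (hq : s((q : B.W × B.W).1, (q : B.W × B.W).2) = B.τH e) : B.gvalH dW e = dW q := by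
  have hex : ∃ q' : ↥B.Qset, s((q' : B.W × B.W).1, (q' : B.W × B.W).2) = B.τH e := ⟨q, hq⟩
  rw [gvalH, dif_pos hex]
  rcases Sym2.eq_iff.mp (hex.choose_spec.trans hq.symm) with ⟨h1, h2⟩ | ⟨h1, h2⟩
  · rw [Subtype.ext (Prod.ext h1 h2)]
  · exact hsym q hex.choose (Prod.ext h1 h2)

theorem forall_Pset_eq_iff_gvalG_eq {dV : ↥B.Pset → ℚ} (hsym : B.BidistSymmG dV) {e : B.ℰ}
    (he : ¬ (B.τG e).IsDiag) (c : ℚ) :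
    (∀ p : ↥B.Pset, s((p : B.V × B.V).1, (p : B.V × B.V).2) = B.τG e → dV p = c) ↔
      B.gvalG dV e = c := by
  obtain ⟨p, hp⟩ := B.exists_Pset_of_not_isDiag he
  refine ⟨fun h => gvalG_eq hsym hp ▸ h p hp, fun h p' hp' => ?_⟩
  rw [← gvalG_eq hsym hp', h]

theorem forall_Qset_eq_iff_gvalH_eq {dW : ↥B.Qset → ℚ} (hsym : B.BidistSymmH dW) {e : B.ℰ}
    (he : ¬ (B.τH e).IsDiag) (c : ℚ) :
    (∀ q : ↥B.Qset, s((q : B.W × B.W).1, (q : B.W × B.W).2) = B.τH e → dW q = c) ↔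
      B.gvalH dW e = c := by
  obtain ⟨q, hq⟩ := B.exists_Qset_of_not_isDiag he
  refine ⟨fun h => gvalH_eq hsym hq ▸ h q hq, fun h q' hq' => ?_⟩
  rw [← gvalH_eq hsym hq', h]

theorem gvalG_add_gvalH {ebar : B.ℰ} {wt : {e : B.ℰ // e ≠ ebar} → ℚ} {dV : ↥B.Pset → ℚ}
    {dW : ↥B.Qset → ℚ} (hsymG : B.BidistSymmG dV) (hsymH : B.BidistSymmH dW)
    (hsum : B.BidistSum ebar wt dV dW) {e : B.ℰ} (hG : ¬ (B.τG e).IsDiag)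
    (hH : ¬ (B.τH e).IsDiag) (he : e ≠ ebar) :
    B.gvalG dV e + B.gvalH dW e = wt ⟨e, he⟩ := by
  obtain ⟨p, hp⟩ := B.exists_Pset_of_not_isDiag hG
  obtain ⟨q, hq⟩ := B.exists_Qset_of_not_isDiag hH
  rw [gvalG_eq hsymG hp, gvalH_eq hsymH hq]
  exact hsum ⟨e, he⟩ p q hp hq

variable (B)

def levelG (dV : ↥B.Pset → ℚ) : B.QVertG dV → ℚ :=
  Quotient.lift (fun a : B.IncG => B.gvalG dV a.1.1) fun _ _ h =>
    Setoid.eqvGen_le (s := Setoid.ker fun a : B.IncG => B.gvalG dV a.1.1) (fun _ _ h => h.1) h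

def levelH (dW : ↥B.Qset → ℚ) : B.QVertH dW → ℚ :=
  Quotient.lift (fun a : B.IncH => B.gvalH dW a.1.1) fun _ _ h =>
    Setoid.eqvGen_le (s := Setoid.ker fun a : B.IncH => B.gvalH dW a.1.1) (fun _ _ h => h.1) h

variable {B}

theorem levelG_of_mem_quotEndsG {dV : ↥B.Pset → ℚ} {e : B.ℰ} {x : B.QVertG dV}
    (hx : x ∈ B.quotEndsG dV e) : B.levelG dV x = B.gvalG dV e := by
  rcases Sym2.mem_iff.mp hx with rfl | rfl <;> rfl

theorem levelH_of_mem_quotEndsH {dW : ↥B.Qset → ℚ} {e : B.ℰ} {x : B.QVertH dW}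
    (hx : x ∈ B.quotEndsH dW e) : B.levelH dW x = B.gvalH dW e := by
  rcases Sym2.mem_iff.mp hx with rfl | rfl <;> rfl

theorem Untangles.of_separating {ebar : B.ℰ} {E1 E2 : Set B.ℰ} (V1 : Set B.V) (W2 : Set B.W)
    (hE1 : ebar ∉ E1) (hE2 : ebar ∉ E2) (hdisj : E1 ∩ E2 = ∅)
    (hcover : ∀ e, e = ebar ∨ e ∈ E1 ∨ e ∈ E2)
    (hG1 : ∀ e, e = ebar ∨ e ∈ E1 → ∀ v ∈ B.τG e, v ∈ V1)
    (hG2 : ∀ e ∈ E2, ∀ v ∈ B.τG e, v ∉ V1)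
    (hH1 : ∀ e ∈ E1, ∀ x ∈ B.τH e, x ∉ W2)
    (hH2 : ∀ e, e = ebar ∨ e ∈ E2 → ∀ x ∈ B.τH e, x ∈ W2) :
    B.Untangles ebar E1 E2 V1 V1ᶜ W2ᶜ W2 :=
  ⟨hE1, hE2, hdisj, hcover, Set.inter_compl_self V1, Set.union_compl_self V1,
    fun e he => hG1 e (.inr he), hG1 ebar (.inl rfl), hG2, Set.compl_inter_self W2,
    Set.compl_union_self W2, hH1, fun e he => hH2 e (.inr he), hH2 ebar (.inl rfl)⟩

end Bigraph

theorem statement17_general (B : Bigraph) (hloop : ¬ B.HasLoop)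
    (ebar : B.ℰ) (dV : ↥B.Pset → ℚ) (dW : ↥B.Qset → ℚ)
    (hd : B.IsBidistance ebar (fun _ => (-1 : ℚ)) dV dW)
    (hvV : ∀ p, dV p = 0 ∨ dV p = -1)
    (oV : LinearOrder (B.QVertG dV)) (oW : LinearOrder (B.QVertH dW)) :
    ∃ (V1 V2 : Set (B.QVertG dV)) (W1 W2 : Set (B.QVertH dW)),
      (B.quotBigraph dV dW oV oW).Untangles ebar
        {e : B.ℰ |
          (∀ p : ↥B.Pset, s((p : B.V × B.V).1, (p : B.V × B.V).2) = B.τG e → dV p = 0) ∧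
          (∀ q : ↥B.Qset, s((q : B.W × B.W).1, (q : B.W × B.W).2) = B.τH e → dW q = -1)}
        {e : B.ℰ |
          (∀ p : ↥B.Pset, s((p : B.V × B.V).1, (p : B.V × B.V).2) = B.τG e → dV p = -1) ∧
          (∀ q : ↥B.Qset, s((q : B.W × B.W).1, (q : B.W × B.W).2) = B.τH e → dW q = 0)}
        V1 V2 W1 W2 := by
  obtain ⟨hsymG, hsymH, hsum, ⟨hbaseG, hbaseH⟩, -, -⟩ := hd
  have hG : ∀ e, ¬ (B.τG e).IsDiag := fun e h => hloop (.inl ⟨e, h⟩)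
  have hH : ∀ e, ¬ (B.τH e).IsDiag := fun e h => hloop (.inr ⟨e, h⟩)
  simp only [Bigraph.forall_Pset_eq_iff_gvalG_eq hsymG (hG _),
    Bigraph.forall_Qset_eq_iff_gvalH_eq hsymH (hH _)] at hbaseG hbaseH ⊢
  have hsplit : ∀ e ≠ ebar, (B.gvalG dV e = 0 ∧ B.gvalH dW e = -1) ∨
      (B.gvalG dV e = -1 ∧ B.gvalH dW e = 0) := by
    intro e he
    have hsum_e := Bigraph.gvalG_add_gvalH hsymG hsymH hsum (hG e) (hH e) he
    obtain ⟨p, hp⟩ := B.exists_Pset_of_not_isDiag (hG e)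
    rcases hvV p with h | h <;> rw [← Bigraph.gvalG_eq hsymG hp] at h
    · exact .inl ⟨h, by linarith⟩
    · exact .inr ⟨h, by linarith⟩
  refine ⟨_, _, _, _, Bigraph.Untangles.of_separating {x | B.levelG dV x = 0}
    {x | B.levelH dW x = 0} ?_ ?_ ?_ ?_ ?_ ?_ ?_ ?_⟩
  · exact fun ⟨_, h⟩ => by norm_num [hbaseH] at h
  · exact fun ⟨h, _⟩ => by norm_num [hbaseG] at h
  · exact Set.eq_empty_iff_forall_notMem.mpr fun e ⟨⟨h1, _⟩, h2, _⟩ => by norm_num [h1] at h2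
  · exact fun e => (eq_or_ne e ebar).imp_right (hsplit e)
  · rintro e (rfl | ⟨he, -⟩) v hv <;> exact (Bigraph.levelG_of_mem_quotEndsG hv).trans ‹_›
  · rintro e ⟨he, -⟩ v hv (hv0 : B.levelG dV v = 0)
    norm_num [Bigraph.levelG_of_mem_quotEndsG hv, he] at hv0
  · rintro e ⟨-, he⟩ x hx (hx0 : B.levelH dW x = 0)
    norm_num [Bigraph.levelH_of_mem_quotEndsH hx, he] at hx0
  · rintro e (rfl | ⟨-, he⟩) x hx <;> exact (Bigraph.levelH_of_mem_quotEndsH hx).trans ‹_›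

/-- Under the stated conditions the quotient bigraph `B_d` untangles via
`ē` with respect to the partition `ℰ = ℰ₁ ⊔ ℰ₂ ⊔ {ē}`, where
`ℰ₁ = {e : d_V = 0 on τ_G(e), d_W = -1 on τ_H(e)}` and
`ℰ₂ = {e : d_V = -1 on τ_G(e), d_W = 0 on τ_H(e)}`. -/
theorem statement17 (B : Bigraph) (hloop : ¬ B.HasLoop) (hpl : B.PseudoLaman)
    (ebar : B.ℰ) (dV : ↥B.Pset → ℚ) (dW : ↥B.Qset → ℚ)
    (hd : B.IsBidistance ebar (fun _ => (-1 : ℚ)) dV dW)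
    (hvV : ∀ p, dV p = 0 ∨ dV p = -1) (hvW : ∀ q, dW q = 0 ∨ dW q = -1)
    (hbG : ¬ IsBridge B.τG ebar) (hbH : ¬ IsBridge B.τH ebar)
    (hV : ¬ ∀ p, dV p = 0) (hW : ¬ ∀ q, dW q = 0)
    (oV : LinearOrder (B.QVertG dV)) (oW : LinearOrder (B.QVertH dW)) :
    ∃ (V1 V2 : Set (B.QVertG dV)) (W1 W2 : Set (B.QVertH dW)),
      (B.quotBigraph dV dW oV oW).Untangles ebar
        {e : B.ℰ |
          (∀ p : ↥B.Pset, s((p : B.V × B.V).1, (p : B.V × B.V).2) = B.τG e → dV p = 0) ∧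
          (∀ q : ↥B.Qset, s((q : B.W × B.W).1, (q : B.W × B.W).2) = B.τH e → dW q = -1)}
        {e : B.ℰ |
          (∀ p : ↥B.Pset, s((p : B.V × B.V).1, (p : B.V × B.V).2) = B.τG e → dV p = -1) ∧
          (∀ q : ↥B.Qset, s((q : B.W × B.W).1, (q : B.W × B.W).2) = B.τH e → dW q = 0)}
        V1 V2 W1 W2 :=
  statement17_general B hloop ebar dV dW hd hvV oV oW
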